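/- arXiv:2010.04937 — 2 statements merged into one kernel-verified Lean document; each statement's English description precedes it below -/
import Mathlib

section
/- There is a universal constant C > 0 such that the following holds. Let f be L-smooth and γ-quasar-convex with respect to a global minimizer x*, let R ≥ ‖x₀ − x*‖, and let ε > 0. If T ≥ C (R²σ²/(γ²ε²) + R²L/(γε)), then SGD run for T iterations with an appropriately chosen constant step size (α = R/(2σ√T) if T > R²L²/σ², and α = 1/(2L) otherwise) satisfies (1/T) ∑_{t=1}^{T} E[f(x_t) − f(x*)] ≤ ε; in particular a uniformly random iterate x̃ among x₁, …, x_T satisfies E[f(x̃) − f(x*)] ≤ ε. -/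
/-!
Write `Δₜ = E f(xₜ) - f(x*)`, `Dₜ = E‖xₜ - x*‖²` and `Gₜ = E‖∇f(xₜ)‖²`. Since `gₜ` is unbiased
given the past and `xₜ` is determined by the past, `E⟪xₜ - x*, gₜ⟫ = E⟪xₜ - x*, ∇f(xₜ)⟫` and
`E‖gₜ‖² ≤ σ² + Gₜ`. Quasar-convexity then gives `Dₜ₊₁ ≤ Dₜ - 2αγΔₜ + α²(σ² + Gₜ)`, and the descent
lemma for `L`-smooth `f` gives `Δₜ₊₁ ≤ Δₜ - αGₜ + (Lα²/2)(σ² + Gₜ)`. For `Lα ≤ 1/2` the potential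
`Dₜ + (4α/3)Δₜ` loses `2αγΔₜ` up to `(4/3)α²σ²` per step, and telescoping bounds the average gap
by `2R²/(3αγT) + (4/3)ασ²/γ`. Both step sizes make this at most `ε` once
`T ≥ 16 (R²σ²/(γ²ε²) + R²L/(γε))`.
-/

open MeasureTheory Finset
open scoped RealInnerProductSpace

section Smooth

variable {E : Type*} [NormedAddCommGroup E] [InnerProductSpace ℝ E] {f : E → ℝ} {f' : E → E}
  {L : ℝ}

theorem eq_of_quasarConvex_of_lipschitz_nonpos {xstar : E} {γ : ℝ}
    (hmin : ∀ y, f xstar ≤ f y) (hf'min : f' xstar = 0)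
    (hqc : ∀ y, f xstar ≥ f y + (1/γ) * ⟪f' y, xstar - y⟫)
    (hsmooth : ∀ y z, ‖f' y - f' z‖ ≤ L * ‖y - z‖) (hL : L ≤ 0) (y : E) : f y = f xstar := by
  have hf'y : f' y = 0 := by
    have := (hsmooth y xstar).trans (mul_nonpos_of_nonpos_of_nonneg hL (norm_nonneg _))
    rwa [hf'min, sub_zero, norm_le_zero_iff] at this
  have := hqc y
  rw [hf'y, inner_zero_left, mul_zero, add_zero] at this
  exact le_antisymm this (hmin y)

variable [CompleteSpace E]

theorem HasGradientAt.eq_zero_of_isLocalMin {x d : E} (hf : HasGradientAt f d x)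
    (hmin : IsLocalMin f x) : d = 0 := by
  simpa using congrArg (InnerProductSpace.toDual ℝ E).symm
    (hmin.hasFDerivAt_eq_zero hf.hasFDerivAt)

theorem le_add_inner_add_sq_of_lipschitz_gradient (hgrad : ∀ y, HasGradientAt f (f' y) y)
    (hsmooth : ∀ y z, ‖f' y - f' z‖ ≤ L * ‖y - z‖) (a b : E) :
    f b ≤ f a + ⟪f' a, b - a⟫ + L / 2 * ‖b - a‖ ^ 2 := by
  set v := b - a
  let φ : ℝ → ℝ := fun t => f (a + t • v) - t * ⟪f' a, v⟫ - L / 2 * t ^ 2 * ‖v‖ ^ 2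
  have hφ : ∀ t, HasDerivAt φ (⟪f' (a + t • v) - f' a, v⟫ - L * t * ‖v‖ ^ 2) t := by
    intro t
    have hline : HasDerivAt (fun s : ℝ => a + s • v) v t := by
      simpa using ((hasDerivAt_id t).smul_const v).const_add a
    have hf := (hgrad (a + t • v)).hasFDerivAt.comp_hasDerivAt t hline
    simp only [InnerProductSpace.toDual_apply_apply] at hf
    refine ((hf.sub ((hasDerivAt_id t).mul_const ⟪f' a, v⟫)).sub
      (((hasDerivAt_pow 2 t).const_mul (L / 2)).mul_const (‖v‖ ^ 2))).congr_deriv ?_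
    rw [inner_sub_left]
    push_cast
    ring
  have hanti : AntitoneOn φ (Set.Icc 0 1) := by
    refine antitoneOn_of_deriv_nonpos (convex_Icc 0 1)
      (fun t _ => (hφ t).continuousAt.continuousWithinAt)
      (fun t _ => (hφ t).differentiableAt.differentiableWithinAt) fun t ht => ?_
    rw [interior_Icc] at ht
    rw [(hφ t).deriv, sub_nonpos]
    calc ⟪f' (a + t • v) - f' a, v⟫ ≤ ‖f' (a + t • v) - f' a‖ * ‖v‖ := real_inner_le_norm _ _
      _ ≤ L * ‖a + t • v - a‖ * ‖v‖ := by gcongr; exact hsmooth _ _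
      _ = L * t * ‖v‖ ^ 2 := by
        rw [add_sub_cancel_left, norm_smul, Real.norm_of_nonneg ht.1.le]; ring
  have h01 := hanti (by simp) (by simp) zero_le_one
  simp only [φ, one_smul, zero_smul, add_zero, zero_mul, sub_zero, one_pow, one_mul,
    zero_pow two_ne_zero, mul_zero] at h01
  rw [show a + v = b from add_sub_cancel a b] at h01
  linarith

end Smooth

theorem MeasureTheory.MemLp.integrable_norm_sq {Ω E : Type*} [MeasurableSpace Ω]
    [NormedAddCommGroup E] {P : Measure Ω} {Y : Ω → E} (hY : MemLp Y 2 P) :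
    Integrable (fun ω => ‖Y ω‖ ^ 2) P :=
  (memLp_two_iff_integrable_sq_norm hY.1).1 hY

section StochasticGradient

variable {E : Type*} [NormedAddCommGroup E] [InnerProductSpace ℝ E]
  {Ω : Type*} {m : MeasurableSpace Ω} [mΩ : MeasurableSpace Ω] {P : Measure Ω}

theorem integrable_inner_of_memLp_two {Y G : Ω → E} (hY : MemLp Y 2 P) (hG : MemLp G 2 P) :
    Integrable (fun ω => ⟪Y ω, G ω⟫) P :=
  memLp_one_iff_integrable.1 ((innerSL ℝ).memLp_of_bilin 1 hY hG)

variable [CompleteSpace E]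

theorem integral_inner_eq_of_condExp_eq [IsFiniteMeasure P] (hm : m ≤ mΩ) {Y G H : Ω → E}
    (hY : StronglyMeasurable[m] Y) (hY2 : MemLp Y 2 P) (hG2 : MemLp G 2 P)
    (hGH : P[G|m] =ᵐ[P] H) :
    ∫ ω, ⟪Y ω, G ω⟫ ∂P = ∫ ω, ⟪Y ω, H ω⟫ ∂P := by
  have := isFiniteMeasure_trim (μ := P) hm
  rw [← integral_condExp hm]
  refine integral_congr_ae ?_
  filter_upwards [condExp_bilin_of_stronglyMeasurable_left (innerSL ℝ) hY
    (integrable_inner_of_memLp_two hY2 hG2) (hG2.integrable one_le_two), hGH] with ω h1 h2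
  rw [← h2]; exact h1

structure IsStochasticGradient (P : Measure Ω) (m : MeasurableSpace Ω) (f' : E → E)
    (X G : Ω → E) (σ : ℝ) : Prop where
  memLp : MemLp G 2 P
  condExp_eq : P[G|m] =ᵐ[P] fun ω => f' (X ω)
  condExp_norm_sq_sub_le : ∀ᵐ ω ∂P, P[fun ω => ‖G ω - f' (X ω)‖ ^ 2|m] ω ≤ σ ^ 2

namespace IsStochasticGradient

variable {f' : E → E} {X G : Ω → E} {σ : ℝ}

theorem memLp_grad [IsFiniteMeasure P] (hG : IsStochasticGradient P m f' X G σ) :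
    MemLp (fun ω => f' (X ω)) 2 P :=
  (hG.memLp.condExp one_le_two).ae_eq hG.condExp_eq

theorem integral_norm_sq_le [IsProbabilityMeasure P] (hm : m ≤ mΩ)
    (hG : IsStochasticGradient P m f' X G σ) (hH : StronglyMeasurable[m] fun ω => f' (X ω)) :
    ∫ ω, ‖G ω‖ ^ 2 ∂P ≤ σ ^ 2 + ∫ ω, ‖f' (X ω)‖ ^ 2 ∂P := by
  have := isFiniteMeasure_trim (μ := P) hm
  have hH2 := hG.memLp_grad
  have hnoise : ∫ ω, ‖G ω - f' (X ω)‖ ^ 2 ∂P ≤ σ ^ 2 := by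
    rw [← integral_condExp hm]
    simpa using integral_mono_ae integrable_condExp (integrable_const _) hG.condExp_norm_sq_sub_le
  have hcross : ∫ ω, ⟪f' (X ω), G ω⟫ ∂P = ∫ ω, ‖f' (X ω)‖ ^ 2 ∂P := by
    simp_rw [integral_inner_eq_of_condExp_eq hm hH hH2 hG.memLp hG.condExp_eq,
      real_inner_self_eq_norm_sq]
  have hsplit : ∀ ω, ‖G ω‖ ^ 2
      = ‖G ω - f' (X ω)‖ ^ 2 + 2 * ⟪f' (X ω), G ω⟫ - ‖f' (X ω)‖ ^ 2 := fun ω => by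
    rw [norm_sub_sq_real, real_inner_comm]; ring
  have hnoise_int : Integrable (fun ω => ‖G ω - f' (X ω)‖ ^ 2) P :=
    (hG.memLp.sub hH2).integrable_norm_sq
  have hcross_int := (integrable_inner_of_memLp_two hH2 hG.memLp).const_mul 2
  simp_rw [hsplit]
  rw [integral_sub ?_ hH2.integrable_norm_sq, integral_add hnoise_int hcross_int,
    integral_const_mul, hcross]
  · linarith
  · exact hnoise_int.add hcross_int

variable {f : E → ℝ} {xstar : E} {γ L α : ℝ}

theorem integral_norm_sub_smul_sub_sq_le [IsProbabilityMeasure P] (hm : m ≤ mΩ)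
    (hG : IsStochasticGradient P m f' X G σ) (hX : StronglyMeasurable[m] X) (hf' : Continuous f')
    (hγ : 0 < γ) (hα : 0 ≤ α) (hqc : ∀ y, f xstar ≥ f y + (1/γ) * ⟪f' y, xstar - y⟫)
    (hX2 : MemLp (fun ω => X ω - xstar) 2 P) (hfX : Integrable (fun ω => f (X ω)) P) :
    ∫ ω, ‖X ω - α • G ω - xstar‖ ^ 2 ∂P ≤ ∫ ω, ‖X ω - xstar‖ ^ 2 ∂P
      - 2 * α * γ * (∫ ω, f (X ω) ∂P - f xstar) + α ^ 2 * (σ ^ 2 + ∫ ω, ‖f' (X ω)‖ ^ 2 ∂P) := by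
  have hH : StronglyMeasurable[m] fun ω => f' (X ω) := hf'.comp_stronglyMeasurable hX
  have hquasar : γ * (∫ ω, f (X ω) ∂P - f xstar) ≤ ∫ ω, ⟪X ω - xstar, f' (X ω)⟫ ∂P := by
    have hpt : ∀ ω, γ * (f (X ω) - f xstar) ≤ ⟪X ω - xstar, f' (X ω)⟫ := fun ω => by
      have h := mul_le_mul_of_nonneg_left (hqc (X ω)) hγ.le
      rw [← neg_sub, inner_neg_right, real_inner_comm, mul_add, ← mul_assoc,
        mul_one_div_cancel hγ.ne'] at h
      linarith
    calc γ * (∫ ω, f (X ω) ∂P - f xstar) = ∫ ω, γ * (f (X ω) - f xstar) ∂P := by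
          rw [integral_const_mul, integral_sub hfX (integrable_const _), integral_const,
            probReal_univ, one_smul]
      _ ≤ _ := integral_mono ((hfX.sub (integrable_const _)).const_mul γ)
          (integrable_inner_of_memLp_two hX2 hG.memLp_grad) hpt
  have hcross : ∫ ω, ⟪X ω - xstar, G ω⟫ ∂P = ∫ ω, ⟪X ω - xstar, f' (X ω)⟫ ∂P :=
    integral_inner_eq_of_condExp_eq hm (hX.sub stronglyMeasurable_const) hX2 hG.memLp
      hG.condExp_eq
  have hnorm := hG.integral_norm_sq_le hm hH
  have hsplit : ∀ ω, ‖X ω - α • G ω - xstar‖ ^ 2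
      = ‖X ω - xstar‖ ^ 2 - 2 * α * ⟪X ω - xstar, G ω⟫ + α ^ 2 * ‖G ω‖ ^ 2 := fun ω => by
    rw [sub_right_comm, norm_sub_sq_real, real_inner_smul_right, norm_smul, mul_pow,
      Real.norm_eq_abs, sq_abs]
    ring
  have hinner_int := (integrable_inner_of_memLp_two hX2 hG.memLp).const_mul (2 * α)
  simp_rw [hsplit]
  rw [integral_add ?_ (hG.memLp.integrable_norm_sq.const_mul _),
    integral_sub hX2.integrable_norm_sq hinner_int, integral_const_mul, integral_const_mul,
    hcross]
  · nlinarith [mul_le_mul_of_nonneg_left hnorm (sq_nonneg α)]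
  · exact hX2.integrable_norm_sq.sub hinner_int

theorem integral_comp_sub_smul_le [IsProbabilityMeasure P] (hm : m ≤ mΩ)
    (hG : IsStochasticGradient P m f' X G σ) (hX : StronglyMeasurable[m] X) (hf' : Continuous f')
    (hgrad : ∀ y, HasGradientAt f (f' y) y) (hsmooth : ∀ y z, ‖f' y - f' z‖ ≤ L * ‖y - z‖)
    (hL : 0 ≤ L) (hfX : Integrable (fun ω => f (X ω)) P)
    (hfX' : Integrable (fun ω => f (X ω - α • G ω)) P) :
    ∫ ω, f (X ω - α • G ω) ∂P ≤ ∫ ω, f (X ω) ∂P - α * ∫ ω, ‖f' (X ω)‖ ^ 2 ∂P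
      + L / 2 * α ^ 2 * (σ ^ 2 + ∫ ω, ‖f' (X ω)‖ ^ 2 ∂P) := by
  have hH : StronglyMeasurable[m] fun ω => f' (X ω) := hf'.comp_stronglyMeasurable hX
  have hcross : ∫ ω, ⟪f' (X ω), G ω⟫ ∂P = ∫ ω, ‖f' (X ω)‖ ^ 2 ∂P := by
    simp_rw [integral_inner_eq_of_condExp_eq hm hH hG.memLp_grad hG.memLp hG.condExp_eq,
      real_inner_self_eq_norm_sq]
  have hnorm := hG.integral_norm_sq_le hm hH
  have hdescent : ∀ ω, f (X ω - α • G ω)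
      ≤ f (X ω) - α * ⟪f' (X ω), G ω⟫ + L / 2 * α ^ 2 * ‖G ω‖ ^ 2 := fun ω => by
    have h := le_add_inner_add_sq_of_lipschitz_gradient hgrad hsmooth (X ω) (X ω - α • G ω)
    rw [sub_sub_cancel_left, inner_neg_right, real_inner_smul_right, norm_neg, norm_smul,
      mul_pow, Real.norm_eq_abs, sq_abs] at h
    linarith
  have hinner_int := (integrable_inner_of_memLp_two hG.memLp_grad hG.memLp).const_mul α
  have hnorm_int := hG.memLp.integrable_norm_sq.const_mul (L / 2 * α ^ 2)
  have hrhs_int : Integrable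
      (fun ω => f (X ω) - α * ⟪f' (X ω), G ω⟫ + L / 2 * α ^ 2 * ‖G ω‖ ^ 2) P :=
    (hfX.sub hinner_int).add hnorm_int
  refine (integral_mono hfX' hrhs_int hdescent).trans ?_
  rw [integral_add ?_ hnorm_int, integral_sub hfX hinner_int,
    integral_const_mul, integral_const_mul, hcross]
  · nlinarith [mul_le_mul_of_nonneg_left hnorm (by positivity : 0 ≤ L / 2 * α ^ 2)]
  · exact hfX.sub hinner_int

end IsStochasticGradient

end StochasticGradient

theorem sum_Icc_le_of_le_sub_add {V a : ℕ → ℝ} {c : ℝ} (h : ∀ t, V (t + 1) ≤ V t - a t + c)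
    (T : ℕ) : ∑ t ∈ Icc 1 T, a t ≤ V 1 - V (T + 1) + T * c := by
  induction T with
  | zero => simp
  | succ T ih =>
    rw [sum_Icc_succ_top (by omega), Nat.cast_succ]
    linarith [h (T + 1)]

theorem average_le_of_lyapunov {D Δ G : ℕ → ℝ} {L γ σ α : ℝ} {T : ℕ} (hα : 0 < α)
    (hγ : 0 < γ) (hLα : L * α ≤ 1 / 2) (hT : 0 < T) (hD : ∀ t, 0 ≤ D t) (hΔ : ∀ t, 0 ≤ Δ t)
    (hG : ∀ t, 0 ≤ G t) (hΔ0 : Δ 0 ≤ L / 2 * D 0)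
    (hDstep : ∀ t, D (t + 1) ≤ D t - 2 * α * γ * Δ t + α ^ 2 * (σ ^ 2 + G t))
    (hΔstep : ∀ t, Δ (t + 1) ≤ Δ t - α * G t + L / 2 * α ^ 2 * (σ ^ 2 + G t)) :
    1 / T * ∑ t ∈ Icc 1 T, Δ t ≤ 2 * D 0 / (3 * α * γ * T) + 4 / 3 * α * σ ^ 2 / γ := by
  -- The weight `4α/3` is what makes the `G t` terms cancel when `Lα ≤ 1/2`.
  have hV : ∀ t, D (t + 1) + 4 * α / 3 * Δ (t + 1)
      ≤ D t + 4 * α / 3 * Δ t - 2 * α * γ * Δ t + 4 / 3 * α ^ 2 * σ ^ 2 := fun t => by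
    have hLα' : 0 ≤ 1 - 2 * (L * α) := by linarith
    nlinarith [hDstep t, mul_le_mul_of_nonneg_left (hΔstep t) (by positivity : 0 ≤ 4 * α / 3),
      mul_nonneg (mul_nonneg (sq_nonneg α) (hG t)) hLα',
      mul_nonneg (mul_nonneg (sq_nonneg α) (sq_nonneg σ)) hLα']
  have hsum := sum_Icc_le_of_le_sub_add (V := fun t => D t + 4 * α / 3 * Δ t)
    (a := fun t => 2 * α * γ * Δ t) hV T
  rw [← mul_sum] at hsum
  have hT1 : (1 : ℝ) ≤ T := by exact_mod_cast hT
  have key : 2 * α * γ * ∑ t ∈ Icc 1 T, Δ t ≤ 4 / 3 * D 0 + 8 / 3 * T * α ^ 2 * σ ^ 2 := by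
    nlinarith [hV 0, mul_nonneg (mul_nonneg hα.le hγ.le) (hΔ 0),
      mul_le_mul_of_nonneg_left hΔ0 (by positivity : 0 ≤ 4 * α / 3),
      mul_nonneg (by linarith : 0 ≤ 1 - 2 * (L * α)) (hD 0),
      hD (T + 1), mul_nonneg hα.le (hΔ (T + 1)),
      mul_nonneg (sub_nonneg.2 hT1) (mul_nonneg (sq_nonneg α) (sq_nonneg σ))]
  have hTpos : (0 : ℝ) < T := by positivity
  calc 1 / T * ∑ t ∈ Icc 1 T, Δ t = (2 * α * γ * ∑ t ∈ Icc 1 T, Δ t) / (2 * α * γ * T) := by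
        field_simp
    _ ≤ (4 / 3 * D 0 + 8 / 3 * T * α ^ 2 * σ ^ 2) / (2 * α * γ * T) := by gcongr
    _ = 2 * D 0 / (3 * α * γ * T) + 4 / 3 * α * σ ^ 2 / γ := by field_simp; ring

theorem stepSize_spec_of_lt {L γ σ R ε T α : ℝ} (hσ : 0 < σ) (hγ : 0 < γ) (hε : 0 < ε)
    (hR : 0 < R) (hT : 16 * (R ^ 2 * σ ^ 2 / (γ ^ 2 * ε ^ 2)) ≤ T)
    (hTL : R ^ 2 * L ^ 2 / σ ^ 2 < T) (hα : α = R / (2 * σ * √T)) :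
    0 < α ∧ L * α ≤ 1 / 2 ∧ 2 * R ^ 2 / (3 * α * γ * T) + 4 / 3 * α * σ ^ 2 / γ ≤ ε := by
  have hT0 : 0 < T := (by positivity : 0 ≤ R ^ 2 * L ^ 2 / σ ^ 2).trans_lt hTL
  obtain ⟨s, hs, rfl⟩ : ∃ s, 0 < s ∧ T = s ^ 2 :=
    ⟨√T, Real.sqrt_pos.2 hT0, (Real.sq_sqrt hT0.le).symm⟩
  rw [Real.sqrt_sq hs.le] at hα
  subst hα
  rw [div_lt_iff₀ (by positivity)] at hTL
  rw [mul_div_assoc', div_le_iff₀ (by positivity)] at hT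
  have hLR : L * R ≤ σ * s := (abs_le_of_sq_le_sq' (by nlinarith) (by positivity)).2
  have hRσ : 4 * R * σ ≤ γ * ε * s := (abs_le_of_sq_le_sq' (by nlinarith) (by positivity)).2
  refine ⟨by positivity, ?_, ?_⟩
  · rw [mul_div_assoc', div_le_iff₀ (by positivity)]; linarith
  · calc 2 * R ^ 2 / (3 * (R / (2 * σ * s)) * γ * s ^ 2) + 4 / 3 * (R / (2 * σ * s)) * σ ^ 2 / γ
          = 2 * R * σ / (γ * s) := by field_simp; ring
      _ ≤ ε := by rw [div_le_iff₀ (by positivity)]; nlinarith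

theorem stepSize_spec_of_le {L γ σ R ε T α : ℝ} (hL : 0 < L) (hσ : 0 < σ) (hγ : 0 < γ)
    (hε : 0 < ε) (hR : 0 < R)
    (hT : 16 * (R ^ 2 * σ ^ 2 / (γ ^ 2 * ε ^ 2) + R ^ 2 * L / (γ * ε)) ≤ T)
    (hTL : T ≤ R ^ 2 * L ^ 2 / σ ^ 2) (hα : α = 1 / (2 * L)) :
    0 < α ∧ L * α ≤ 1 / 2 ∧ 2 * R ^ 2 / (3 * α * γ * T) + 4 / 3 * α * σ ^ 2 / γ ≤ ε := by
  subst hα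
  have hT1 : 16 * (R ^ 2 * σ ^ 2 / (γ ^ 2 * ε ^ 2)) ≤ R ^ 2 * L ^ 2 / σ ^ 2 := by
    have : 0 ≤ R ^ 2 * L / (γ * ε) := by positivity
    linarith
  have hT2 : 16 * (R ^ 2 * L / (γ * ε)) ≤ T := by
    have : 0 ≤ R ^ 2 * σ ^ 2 / (γ ^ 2 * ε ^ 2) := by positivity
    linarith
  rw [mul_div_assoc', div_le_div_iff₀ (by positivity) (by positivity)] at hT1
  rw [mul_div_assoc', div_le_iff₀' (by positivity)] at hT2
  have hσL : 4 * σ ^ 2 ≤ γ * ε * L :=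
    (abs_le_of_sq_le_sq' (by nlinarith [pow_pos hR 2]) (by positivity)).2
  have hTpos : 0 < T := by nlinarith [pow_pos hR 2, mul_pos hγ hε]
  refine ⟨by positivity, by field_simp; rfl, ?_⟩
  calc 2 * R ^ 2 / (3 * (1 / (2 * L)) * γ * T) + 4 / 3 * (1 / (2 * L)) * σ ^ 2 / γ
      = 4 * L * R ^ 2 / (3 * γ * T) + 2 * σ ^ 2 / (3 * L * γ) := by field_simp; ring
    _ ≤ ε / 12 + ε / 6 := by
      apply add_le_add
      · rw [div_le_div_iff₀ (by positivity) (by norm_num)]; nlinarith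
      · rw [div_le_div_iff₀ (by positivity) (by norm_num)]; nlinarith
    _ ≤ ε := by linarith

theorem sgd_iterate_eq_of_stepSize_zero {E Ω : Type*} [NormedAddCommGroup E]
    [NormedSpace ℝ E] {g x : ℕ → Ω → E} {x₀ : E} {α : ℝ} (hx0 : x 0 = fun _ => x₀)
    (hstep : ∀ t, x (t + 1) = fun ω => x t ω - α • g t ω) (hα : α = 0) (t : ℕ) :
    x t = fun _ => x₀ := by
  induction t with
  | zero => exact hx0
  | succ t ih => simp [hstep, hα, ih]

section Iterates

variable {E Ω : Type*} [MeasurableSpace E] {g : ℕ → Ω → E}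

abbrev sigmaBefore (g : ℕ → Ω → E) (t : ℕ) : MeasurableSpace Ω :=
  ⨆ i ∈ Finset.range t, MeasurableSpace.comap (g i) inferInstance

theorem sigmaBefore_le [mΩ : MeasurableSpace Ω] (hg : ∀ t, Measurable (g t)) (t : ℕ) :
    sigmaBefore g t ≤ mΩ :=
  iSup₂_le fun i _ => (hg i).comap_le

theorem sigmaBefore_mono (g : ℕ → Ω → E) : Monotone (sigmaBefore g) := fun _ _ hts =>
  biSup_mono fun _ hi => Finset.mem_range.2 ((Finset.mem_range.1 hi).trans_le hts)

variable [NormedAddCommGroup E] [BorelSpace E] [SecondCountableTopology E]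

theorem stronglyMeasurable_sigmaBefore_succ (t : ℕ) :
    StronglyMeasurable[sigmaBefore g (t + 1)] (g t) :=
  (Measurable.of_comap_le (le_iSup₂ (f := fun i (_ : i ∈ Finset.range (t + 1)) =>
    MeasurableSpace.comap (g i) inferInstance) t (Finset.self_mem_range_succ t))).stronglyMeasurable

theorem stronglyMeasurable_sgd_iterate [NormedSpace ℝ E] {x : ℕ → Ω → E} {x₀ : E} {α : ℝ}
    (hx0 : x 0 = fun _ => x₀) (hstep : ∀ t, x (t + 1) = fun ω => x t ω - α • g t ω) (t : ℕ) :
    StronglyMeasurable[sigmaBefore g t] (x t) := by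
  induction t with
  | zero => rw [hx0]; exact stronglyMeasurable_const
  | succ t ih =>
    rw [hstep t]
    exact (ih.mono (sigmaBefore_mono g t.le_succ)).sub
      ((stronglyMeasurable_sigmaBefore_succ t).const_smul α)

end Iterates

theorem sgd_average_gap_le {E Ω : Type*} [NormedAddCommGroup E] [InnerProductSpace ℝ E]
    [CompleteSpace E] [MeasurableSpace E] [BorelSpace E] [SecondCountableTopology E]
    [MeasurableSpace Ω] {P : Measure Ω} [IsProbabilityMeasure P] {f : E → ℝ} {f' : E → E}
    {xstar x₀ : E} {L γ σ α : ℝ} {T : ℕ} {x g : ℕ → Ω → E}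
    (hgrad : ∀ y, HasGradientAt f (f' y) y) (hmin : ∀ y, f xstar ≤ f y) (hγ : 0 < γ)
    (hqc : ∀ y, f xstar ≥ f y + (1/γ) * ⟪f' y, xstar - y⟫)
    (hsmooth : ∀ y z, ‖f' y - f' z‖ ≤ L * ‖y - z‖) (hL : 0 ≤ L) (hα : 0 < α)
    (hLα : L * α ≤ 1 / 2) (hT : 0 < T) (hx0 : x 0 = fun _ => x₀)
    (hstep : ∀ t, x (t + 1) = fun ω => x t ω - α • g t ω) (hgmeas : ∀ t, Measurable (g t))
    (hG : ∀ t, IsStochasticGradient P (sigmaBefore g t) f' (x t) (g t) σ)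
    (hfint : ∀ t, Integrable (fun ω => f (x t ω)) P)
    (hsqint : ∀ t, Integrable (fun ω => ‖x t ω - xstar‖ ^ 2) P) :
    1 / T * ∑ t ∈ Icc 1 T, (∫ ω, f (x t ω) ∂P - f xstar)
      ≤ 2 * ‖x₀ - xstar‖ ^ 2 / (3 * α * γ * T) + 4 / 3 * α * σ ^ 2 / γ := by
  have hm := sigmaBefore_le hgmeas
  have hxm := stronglyMeasurable_sgd_iterate hx0 hstep
  have hf' : Continuous f' :=
    (LipschitzWith.of_dist_le' fun y z => by simpa only [dist_eq_norm] using hsmooth y z).continuous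
  have hf'min : f' xstar = 0 := (hgrad xstar).eq_zero_of_isLocalMin (.of_forall hmin)
  have hX2 : ∀ t, MemLp (fun ω => x t ω - xstar) 2 P := fun t =>
    (memLp_two_iff_integrable_sq_norm
      (((hxm t).mono (hm t)).aestronglyMeasurable.sub aestronglyMeasurable_const)).2 (hsqint t)
  have hgap0 : f x₀ - f xstar ≤ L / 2 * ‖x₀ - xstar‖ ^ 2 := by
    have := le_add_inner_add_sq_of_lipschitz_gradient hgrad hsmooth xstar x₀
    rw [hf'min, inner_zero_left] at this
    linarith
  have hD0 : ∫ ω, ‖x 0 ω - xstar‖ ^ 2 ∂P = ‖x₀ - xstar‖ ^ 2 := by simp [hx0]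
  rw [← hD0]
  refine average_le_of_lyapunov (D := fun t => ∫ ω, ‖x t ω - xstar‖ ^ 2 ∂P)
    (Δ := fun t => ∫ ω, f (x t ω) ∂P - f xstar) (G := fun t => ∫ ω, ‖f' (x t ω)‖ ^ 2 ∂P)
    hα hγ hLα hT
    (fun t => integral_nonneg fun ω => by positivity) (fun t => ?_)
    (fun t => integral_nonneg fun ω => by positivity) (by simpa [hx0] using hgap0)
    (fun t => ?_) (fun t => ?_)
  · simpa using integral_mono (integrable_const _) (hfint t) fun ω => hmin (x t ω)
  · simp only [hstep t]
    exact (hG t).integral_norm_sub_smul_sub_sq_le (hm t) (hxm t) hf' hγ hα.le hqc (hX2 t) (hfint t)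
  · have := (hG t).integral_comp_sub_smul_le (hm t) (hxm t) hf' hgrad hsmooth hL (hfint t)
      (by simpa only [hstep t] using hfint (t + 1))
    simp only [hstep t]
    linarith

theorem sgd_quasar_eps_optimal_complexity :
    ∃ C : ℝ, 0 < C ∧
      ∀ {Ω : Type} [MeasurableSpace Ω] (P : Measure Ω) [IsProbabilityMeasure P]
    {n : ℕ} (f : EuclideanSpace ℝ (Fin n) → ℝ)
    (f' : EuclideanSpace ℝ (Fin n) → EuclideanSpace ℝ (Fin n))
    (xstar x₀ : EuclideanSpace ℝ (Fin n))
    (L γ σ R α ε : ℝ) (T : ℕ)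
    (x g : ℕ → Ω → EuclideanSpace ℝ (Fin n))
    (hgrad : ∀ y, HasGradientAt f (f' y) y)
    (hmin : ∀ y, f xstar ≤ f y)
    (hγ0 : 0 < γ) (hγ1 : γ ≤ 1)
    (hqc : ∀ y, f xstar ≥ f y + (1/γ) * ⟪f' y, xstar - y⟫)
    (hsmooth : ∀ y z, ‖f' y - f' z‖ ≤ L * ‖y - z‖)
    (hR : ‖x₀ - xstar‖ ≤ R)
    (hσ : 0 < σ) (hε : 0 < ε)
    (hT : (T : ℝ) ≥ C * (R^2*σ^2/(γ^2*ε^2) + R^2*L/(γ*ε)))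
    (hαdef : α = if (T : ℝ) > R^2*L^2/σ^2 then R/(2*σ*Real.sqrt T) else 1/(2*L))
    (hx0 : x 0 = fun _ => x₀)
    (hstep : ∀ t, x (t+1) = fun ω => x t ω - α • g t ω)
    (hgmeas : ∀ t, Measurable (g t))
    (hgint : ∀ t, Integrable (g t) P)
    (hgsqint : ∀ t, Integrable (fun ω => ‖g t ω‖^2) P)
    (hunbiased : ∀ t,
      MeasureTheory.condExp
          (⨆ i ∈ Finset.range t, MeasurableSpace.comap (g i) inferInstance) P (g t)
        =ᵐ[P] fun ω => f' (x t ω))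
    (hvar : ∀ t, ∀ᵐ ω ∂P,
      MeasureTheory.condExp
          (⨆ i ∈ Finset.range t, MeasurableSpace.comap (g i) inferInstance) P
          (fun ω' => ‖g t ω' - f' (x t ω')‖^2) ω ≤ σ^2)
    (hfint : ∀ t, Integrable (fun ω => f (x t ω)) P)
    (hsqint : ∀ t, Integrable (fun ω => ‖x t ω - xstar‖^2) P)
,      (1/(T : ℝ)) * ∑ t ∈ Finset.Icc 1 T, (∫ ω, f (x t ω) ∂P - f xstar) ≤ ε := by
  refine ⟨16, by norm_num, ?_⟩
  intro Ω _ P _ n f f' xstar x₀ L γ σ R α ε T x g hgrad hmin hγ0 hγ1 hqc hsmooth hR hσ hε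
    hT hαdef hx0 hstep hgmeas hgint hgsqint hunbiased hvar hfint hsqint
  obtain rfl | hT0 := T.eq_zero_or_pos
  · simpa using hε.le
  have hf'min : f' xstar = 0 := (hgrad xstar).eq_zero_of_isLocalMin (.of_forall hmin)
  obtain hL | hL := le_or_gt L 0
  · simp [eq_of_quasarConvex_of_lipschitz_nonpos hmin hf'min hqc hsmooth hL, hε.le]
  obtain rfl | hR0 := (norm_nonneg _ |>.trans hR).eq_or_lt
  · have hx₀ : x₀ = xstar := by simpa [sub_eq_zero] using hR
    have hα : α = 0 := by simp [hαdef, hT0]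
    simp [sgd_iterate_eq_of_stepSize_zero hx0 hstep hα, hx₀, hε.le]
  have hG : ∀ t, IsStochasticGradient P (sigmaBefore g t) f' (x t) (g t) σ := fun t =>
    ⟨(memLp_two_iff_integrable_sq_norm (hgint t).1).2 (hgsqint t), hunbiased t, hvar t⟩
  obtain ⟨hα, hLα, hbound⟩ :
      0 < α ∧ L * α ≤ 1 / 2 ∧ 2 * R ^ 2 / (3 * α * γ * T) + 4 / 3 * α * σ ^ 2 / γ ≤ ε := by
    split_ifs at hαdef with hTL
    · refine stepSize_spec_of_lt hσ hγ0 hε hR0 (le_trans ?_ hT) hTL hαdef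
      gcongr
      exact le_add_of_nonneg_right (by positivity)
    · exact stepSize_spec_of_le hL hσ hγ0 hε hR0 hT (not_lt.1 hTL) hαdef
  calc _ ≤ 2 * ‖x₀ - xstar‖ ^ 2 / (3 * α * γ * T) + 4 / 3 * α * σ ^ 2 / γ :=
        sgd_average_gap_le hgrad hmin hγ0 hqc hsmooth hL.le hα hLα hT0 hx0 hstep hgmeas hG hfint
          hsqint
    _ ≤ 2 * R ^ 2 / (3 * α * γ * T) + 4 / 3 * α * σ ^ 2 / γ := by gcongr
    _ ≤ ε := hbound
end

section
/- Let f be L-smooth and (γ, μ)-strongly-quasar-convex with respect to a global minimizer x*, and run SGD with constant step size α > 0. Then for every t ≥ 0, E‖x_{t+1} − x*‖² ≤ (1 − γμα) E‖x_t − x*‖² − 2α(γ − αL) E[f(x_t) − f(x*)] + α²σ². -/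
open MeasureTheory Finset
open scoped RealInnerProductSpace

/-!
Write `x_{t+1} - x* = (x_t - x* - α ∇f(x_t)) - α ξ_t` with the noise `ξ_t = g_t - ∇f(x_t)`.
The first term is measurable with respect to the σ-algebra generated by `g_0, …, g_{t-1}`, on
which `ξ_t` has conditional mean zero, so the cross term vanishes in expectation and
`E‖x_{t+1} - x*‖² = E‖x_t - x* - α ∇f(x_t)‖² + α² E‖ξ_t‖²`, where `E‖ξ_t‖² ≤ σ²`.
The deterministic gradient step is bounded pointwise: strong quasar-convexity bounds
`⟪x - x*, ∇f(x)⟫` from below, and the descent lemma for `L`-smooth functions, applied at the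
point `x - ∇f(x)/L`, gives `‖∇f(x)‖² ≤ 2L (f(x) - f(x*))` because `x*` is a global minimizer.
-/

section Smooth

variable {E : Type*} [NormedAddCommGroup E] [InnerProductSpace ℝ E]
  {f : E → ℝ} {f' : E → E} {L : ℝ}

theorem norm_sub_smul_gradient_sub_sq_le {γ μ α : ℝ} {xstar y : E} (hγ : 0 < γ) (hα : 0 ≤ α)
    (hsqc : f xstar ≥ f y + (1/γ) * ⟪f' y, xstar - y⟫ + (μ/2) * ‖y - xstar‖^2)
    (hgrad_sq : ‖f' y‖ ^ 2 ≤ 2 * L * (f y - f xstar)) :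
    ‖y - xstar - α • f' y‖ ^ 2
      ≤ (1 - γ*μ*α) * ‖y - xstar‖ ^ 2 - 2*α*(γ - α*L) * (f y - f xstar) := by
  have hinner : γ * (f y - f xstar) + γ * μ / 2 * ‖y - xstar‖ ^ 2 ≤ ⟪y - xstar, f' y⟫ := by
    have h := mul_le_mul_of_nonneg_left hsqc hγ.le
    rw [← neg_sub y xstar, inner_neg_right, real_inner_comm] at h
    field_simp at h
    linarith
  rw [norm_sub_sq_real, real_inner_smul_right, norm_smul, Real.norm_of_nonneg hα]
  nlinarith [mul_le_mul_of_nonneg_left hinner hα, mul_le_mul_of_nonneg_left hgrad_sq (sq_nonneg α)]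

variable [CompleteSpace E]

theorem le_add_inner_add_sq_of_gradient_lipschitz (hgrad : ∀ y, HasGradientAt f (f' y) y)
    (hsmooth : ∀ y z, ‖f' y - f' z‖ ≤ L * ‖y - z‖) (y v : E) :
    f (y + v) ≤ f y + ⟪f' y, v⟫ + L / 2 * ‖v‖ ^ 2 := by
  let φ : ℝ → ℝ := fun s ↦ f (y + s • v) - s * ⟪f' y, v⟫ - L / 2 * s ^ 2 * ‖v‖ ^ 2
  have hφ : ∀ s, HasDerivAt φ (⟪f' (y + s • v), v⟫ - ⟪f' y, v⟫ - L * s * ‖v‖ ^ 2) s := by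
    intro s
    have hline : HasDerivAt (fun s : ℝ ↦ y + s • v) v s := by
      simpa using ((hasDerivAt_id s).smul_const v).const_add y
    have hf := (hgrad (y + s • v)).hasFDerivAt.comp_hasDerivAt s hline
    simp only [InnerProductSpace.toDual_apply_apply] at hf
    refine ((hf.sub ((hasDerivAt_id s).mul_const ⟪f' y, v⟫)).sub
      (((hasDerivAt_pow 2 s).const_mul (L / 2)).mul_const (‖v‖ ^ 2))).congr_deriv ?_
    simp only [one_mul]
    ring
  have hanti : AntitoneOn φ (Set.Ici 0) := by
    refine antitoneOn_of_hasDerivWithinAt_nonpos (convex_Ici 0)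
      (fun s _ ↦ (hφ s).continuousAt.continuousWithinAt) (fun s _ ↦ (hφ s).hasDerivWithinAt)
      fun s hs ↦ ?_
    rw [interior_Ici, Set.mem_Ioi] at hs
    have hlip : ‖f' (y + s • v) - f' y‖ ≤ L * (s * ‖v‖) := by
      simpa [norm_smul, abs_of_pos hs] using hsmooth (y + s • v) y
    have := real_inner_le_norm (f' (y + s • v) - f' y) v
    rw [inner_sub_left] at this
    nlinarith [norm_nonneg v]
  have := hanti (Set.self_mem_Ici) (Set.mem_Ici.2 zero_le_one) zero_le_one
  simp only [φ] at this
  norm_num at this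
  linarith

theorem IsLocalMin.hasGradientAt_eq_zero {a g : E} (h : IsLocalMin f a)
    (hf : HasGradientAt f g a) : g = 0 := by
  simpa using h.hasFDerivAt_eq_zero hf.hasFDerivAt

theorem norm_sq_gradient_le {xstar : E} (hgrad : ∀ y, HasGradientAt f (f' y) y)
    (hmin : ∀ y, f xstar ≤ f y) (hsmooth : ∀ y z, ‖f' y - f' z‖ ≤ L * ‖y - z‖) (y : E) :
    ‖f' y‖ ^ 2 ≤ 2 * L * (f y - f xstar) := by
  rcases le_or_gt L 0 with hL | hL
  -- for `L ≤ 0` the gradient is constant, hence zero, and `f` is constant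
  · have hstar := IsLocalMin.hasGradientAt_eq_zero (Filter.Eventually.of_forall hmin)
      (hgrad xstar)
    have hzero : f' y = 0 := by
      have := hsmooth y xstar
      rw [hstar, sub_zero] at this
      exact norm_le_zero_iff.1 (this.trans (mul_nonpos_of_nonpos_of_nonneg hL (norm_nonneg _)))
    have hup := le_add_inner_add_sq_of_gradient_lipschitz hgrad hsmooth xstar (y - xstar)
    rw [hstar, inner_zero_left, add_sub_cancel] at hup
    have hfy : f y = f xstar :=
      le_antisymm (by nlinarith [sq_nonneg ‖y - xstar‖]) (hmin y)
    rw [hzero, hfy]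
    simp
  · have hup := le_add_inner_add_sq_of_gradient_lipschitz hgrad hsmooth y (-(L⁻¹ • f' y))
    rw [inner_neg_right, real_inner_smul_right, real_inner_self_eq_norm_sq, norm_neg,
      norm_smul, Real.norm_of_nonneg (inv_nonneg.2 hL.le)] at hup
    have hsq : L / 2 * (L⁻¹ * ‖f' y‖) ^ 2 = L⁻¹ * ‖f' y‖ ^ 2 / 2 := by
      field_simp
    calc ‖f' y‖ ^ 2 = 2 * L * (L⁻¹ * ‖f' y‖ ^ 2 / 2) := by field_simp
      _ ≤ 2 * L * (f y - f xstar) := by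
        gcongr
        linarith [hmin (y + -(L⁻¹ • f' y))]

end Smooth

section Conditional

variable {Ω : Type*} {m m₀ : MeasurableSpace Ω} {μ : Measure Ω}
  {E : Type*} [NormedAddCommGroup E]

theorem memLp_two_of_norm_sq_le {u : Ω → E} {h : Ω → ℝ} (hu : AEStronglyMeasurable u μ)
    (hh : Integrable h μ) (hle : ∀ ω, ‖u ω‖ ^ 2 ≤ h ω) : MemLp u 2 μ :=
  (memLp_two_iff_integrable_sq_norm hu).2 <| hh.mono' (hu.norm.pow 2) <|
    ae_of_all _ fun ω ↦ by simpa only [norm_pow, norm_norm] using hle ω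

variable [InnerProductSpace ℝ E]

theorem MeasureTheory.MemLp.integrable_inner {u v : Ω → E} (hu : MemLp u 2 μ)
    (hv : MemLp v 2 μ) : Integrable (fun ω ↦ ⟪u ω, v ω⟫) μ :=
  memLp_one_iff_integrable.1 ((innerSL ℝ).memLp_of_bilin 1 hu hv)

theorem integral_le_of_condExp_le [IsProbabilityMeasure μ] (hm : m ≤ m₀) {φ : Ω → ℝ} {c : ℝ}
    (hφ : ∀ᵐ ω ∂μ, (μ[φ | m]) ω ≤ c) : ∫ ω, φ ω ∂μ ≤ c := by
  rw [← integral_condExp hm]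
  simpa using integral_mono_ae integrable_condExp (integrable_const c) hφ

variable [CompleteSpace E]

theorem integral_inner_eq_zero_of_condExp_eq_zero (hm : m ≤ m₀) [SigmaFinite (μ.trim hm)]
    {u ξ : Ω → E} (hu : StronglyMeasurable[m] u) (huξ : Integrable (fun ω ↦ ⟪u ω, ξ ω⟫) μ)
    (hξ : Integrable ξ μ) (hξ0 : μ[ξ | m] =ᵐ[μ] 0) :
    ∫ ω, ⟪u ω, ξ ω⟫ ∂μ = 0 := by
  have hpull : μ[fun ω ↦ ⟪u ω, ξ ω⟫ | m] =ᵐ[μ] fun ω ↦ ⟪u ω, (μ[ξ | m]) ω⟫ :=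
    condExp_bilin_of_stronglyMeasurable_left (innerSL ℝ) hu huξ hξ
  rw [← integral_condExp hm, integral_congr_ae (hpull.trans ?_), integral_zero]
  filter_upwards [hξ0] with ω hω
  simp [hω]

theorem integral_norm_sub_smul_sq_of_condExp_eq_zero (hm : m ≤ m₀) [IsFiniteMeasure μ]
    {a ξ : Ω → E} (ha : StronglyMeasurable[m] a) (ha2 : MemLp a 2 μ) (hξ2 : MemLp ξ 2 μ)
    (hξ0 : μ[ξ | m] =ᵐ[μ] 0) (α : ℝ) :
    ∫ ω, ‖a ω - α • ξ ω‖ ^ 2 ∂μ = ∫ ω, ‖a ω‖ ^ 2 ∂μ + α ^ 2 * ∫ ω, ‖ξ ω‖ ^ 2 ∂μ := by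
  have horth := integral_inner_eq_zero_of_condExp_eq_zero hm ha (ha2.integrable_inner hξ2)
    (hξ2.integrable one_le_two) hξ0
  have hexpand : ∀ ω, ‖a ω - α • ξ ω‖ ^ 2
      = ‖a ω‖ ^ 2 - 2 * α * ⟪a ω, ξ ω⟫ + α ^ 2 * ‖ξ ω‖ ^ 2 := fun ω ↦ by
    rw [norm_sub_sq_real, real_inner_smul_right, norm_smul, mul_pow, Real.norm_eq_abs, sq_abs]
    ring
  have ha_sq := (memLp_two_iff_integrable_sq_norm ha2.1).1 ha2
  have hξ_sq := (memLp_two_iff_integrable_sq_norm hξ2.1).1 hξ2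
  have hcross := (ha2.integrable_inner hξ2).const_mul (2 * α)
  simp_rw [hexpand]
  rw [integral_add (ha_sq.sub' hcross) (hξ_sq.const_mul _), integral_sub ha_sq hcross,
    integral_const_mul, integral_const_mul, horth]
  ring

end Conditional

section Step

variable {Ω : Type*} {m m₀ : MeasurableSpace Ω} {P : Measure Ω} [IsProbabilityMeasure P]
  {E : Type*} [NormedAddCommGroup E] [InnerProductSpace ℝ E] [CompleteSpace E]
  {f : E → ℝ} {f' : E → E} {xstar : E} {L γ μ σ α : ℝ}

theorem integral_norm_sgd_step_sub_sq_le (hm : m ≤ m₀) (hγ : 0 < γ) (hα : 0 ≤ α)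
    (hsqc : ∀ y, f xstar ≥ f y + (1/γ) * ⟪f' y, xstar - y⟫ + (μ/2) * ‖y - xstar‖^2)
    (hgrad_sq : ∀ y, ‖f' y‖ ^ 2 ≤ 2 * L * (f y - f xstar))
    {y G : Ω → E} (hy : StronglyMeasurable[m] y) (hF : StronglyMeasurable[m] fun ω ↦ f' (y ω))
    (hG : MemLp G 2 P) (hmean : P[G | m] =ᵐ[P] fun ω ↦ f' (y ω))
    (hvar : ∀ᵐ ω ∂P, P[fun ω' ↦ ‖G ω' - f' (y ω')‖ ^ 2 | m] ω ≤ σ ^ 2)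
    (hfy : Integrable (fun ω ↦ f (y ω)) P) (hy2 : Integrable (fun ω ↦ ‖y ω - xstar‖ ^ 2) P) :
    ∫ ω, ‖y ω - α • G ω - xstar‖ ^ 2 ∂P
      ≤ (1 - γ*μ*α) * ∫ ω, ‖y ω - xstar‖ ^ 2 ∂P
        - 2*α*(γ - α*L) * (∫ ω, f (y ω) ∂P - f xstar) + α^2*σ^2 := by
  have hgap : Integrable (fun ω ↦ f (y ω) - f xstar) P := hfy.sub' (integrable_const _)
  have hF2 : MemLp (fun ω ↦ f' (y ω)) 2 P :=
    memLp_two_of_norm_sq_le (hF.mono hm).aestronglyMeasurable (hgap.const_mul (2 * L))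
      fun ω ↦ hgrad_sq (y ω)
  have hdev2 : MemLp (fun ω ↦ y ω - xstar) 2 P :=
    (memLp_two_iff_integrable_sq_norm
      ((hy.mono hm).sub stronglyMeasurable_const).aestronglyMeasurable).2 hy2
  have hgd2 := hdev2.sub (hF2.const_smul α)
  have hnoise : P[fun ω ↦ G ω - f' (y ω) | m] =ᵐ[P] 0 := by
    have hFint := hF2.integrable one_le_two
    refine (condExp_sub (hG.integrable one_le_two) hFint _).trans ?_
    filter_upwards [hmean] with ω hω
    rw [Pi.sub_apply, hω, condExp_of_stronglyMeasurable hm hF hFint, sub_self, Pi.zero_apply]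
  have hsplit : ∀ ω, y ω - α • G ω - xstar
      = (y ω - xstar - α • f' (y ω)) - α • (G ω - f' (y ω)) := fun ω ↦ by module
  calc ∫ ω, ‖y ω - α • G ω - xstar‖ ^ 2 ∂P
      = ∫ ω, ‖(y ω - xstar - α • f' (y ω)) - α • (G ω - f' (y ω))‖ ^ 2 ∂P := by
        simp_rw [hsplit]
    _ = ∫ ω, ‖y ω - xstar - α • f' (y ω)‖ ^ 2 ∂P
          + α ^ 2 * ∫ ω, ‖G ω - f' (y ω)‖ ^ 2 ∂P :=
        integral_norm_sub_smul_sq_of_condExp_eq_zero hm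
          ((hy.sub stronglyMeasurable_const).sub (hF.const_smul α)) hgd2 (hG.sub hF2) hnoise α
    _ ≤ ∫ ω, ((1 - γ*μ*α) * ‖y ω - xstar‖ ^ 2 - 2*α*(γ - α*L) * (f (y ω) - f xstar)) ∂P
          + α ^ 2 * σ ^ 2 := by
        gcongr ?_ + _ * ?_
        · exact integral_mono ((memLp_two_iff_integrable_sq_norm hgd2.1).1 hgd2)
            ((hy2.const_mul _).sub' (hgap.const_mul _)) fun ω ↦
              norm_sub_smul_gradient_sub_sq_le hγ hα (hsqc _) (hgrad_sq _)
        · exact integral_le_of_condExp_le hm hvar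
    _ = _ := by
        rw [integral_sub (hy2.const_mul _) (hgap.const_mul _), integral_const_mul,
          integral_const_mul, integral_sub hfy (integrable_const _), integral_const,
          probReal_univ, one_smul]

end Step

section History

variable {Ω E : Type*} [MeasurableSpace E]

abbrev historySigma (g : ℕ → Ω → E) (t : ℕ) : MeasurableSpace Ω :=
  ⨆ i ∈ Finset.range t, MeasurableSpace.comap (g i) inferInstance

theorem historySigma_le [mΩ : MeasurableSpace Ω] {g : ℕ → Ω → E}
    (hg : ∀ i, Measurable (g i)) (t : ℕ) : historySigma g t ≤ mΩ :=
  iSup₂_le fun i _ ↦ (hg i).comap_le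

theorem historySigma_mono (g : ℕ → Ω → E) : Monotone (historySigma g) :=
  fun _ _ hst ↦ biSup_mono fun _ hi ↦
    Finset.mem_range.2 ((Finset.mem_range.1 hi).trans_le hst)

theorem measurable_historySigma_succ (g : ℕ → Ω → E) (t : ℕ) :
    Measurable[historySigma g (t + 1)] (g t) :=
  (measurable_iff_comap_le.2 le_rfl).mono
    (le_iSup₂ (f := fun i _ ↦ MeasurableSpace.comap (g i) inferInstance) t
      (Finset.mem_range_succ_iff.2 le_rfl)) le_rfl

theorem measurable_historySigma_of_sub_smul [NormedAddCommGroup E] [NormedSpace ℝ E]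
    [BorelSpace E] [SecondCountableTopology E] {g x : ℕ → Ω → E} {x₀ : E} {α : ℝ}
    (hx0 : x 0 = fun _ ↦ x₀) (hstep : ∀ t, x (t + 1) = fun ω ↦ x t ω - α • g t ω) (t : ℕ) :
    Measurable[historySigma g t] (x t) := by
  induction t with
  | zero => rw [hx0]; exact measurable_const
  | succ t ih =>
    rw [hstep t]
    exact (ih.mono (historySigma_mono g t.le_succ) le_rfl).sub
      ((measurable_historySigma_succ g t).const_smul α)

end History

theorem sgd_strongly_quasar_one_step_general
    {Ω : Type*} [MeasurableSpace Ω] (P : Measure Ω) [IsProbabilityMeasure P]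
    {n : ℕ} (f : EuclideanSpace ℝ (Fin n) → ℝ)
    (f' : EuclideanSpace ℝ (Fin n) → EuclideanSpace ℝ (Fin n))
    (xstar x₀ : EuclideanSpace ℝ (Fin n))
    (L γ μ σ α : ℝ)
    (x g : ℕ → Ω → EuclideanSpace ℝ (Fin n))
    (hgrad : ∀ y, HasGradientAt f (f' y) y)
    (hmin : ∀ y, f xstar ≤ f y)
    (hγ0 : 0 < γ)
    (hsqc : ∀ y, f xstar ≥ f y + (1/γ) * ⟪f' y, xstar - y⟫ + (μ/2) * ‖y - xstar‖^2)
    (hsmooth : ∀ y z, ‖f' y - f' z‖ ≤ L * ‖y - z‖)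
    (hα0 : 0 < α)
    (hx0 : x 0 = fun _ => x₀)
    (hstep : ∀ t, x (t+1) = fun ω => x t ω - α • g t ω)
    (hgmeas : ∀ t, Measurable (g t))
    (hgsqint : ∀ t, Integrable (fun ω => ‖g t ω‖^2) P)
    (hunbiased : ∀ t,
      MeasureTheory.condExp
          (⨆ i ∈ Finset.range t, MeasurableSpace.comap (g i) inferInstance) P (g t)
        =ᵐ[P] fun ω => f' (x t ω))
    (hvar : ∀ t, ∀ᵐ ω ∂P,
      MeasureTheory.condExp
          (⨆ i ∈ Finset.range t, MeasurableSpace.comap (g i) inferInstance) P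
          (fun ω' => ‖g t ω' - f' (x t ω')‖^2) ω ≤ σ^2)
    (hfint : ∀ t, Integrable (fun ω => f (x t ω)) P)
    (hsqint : ∀ t, Integrable (fun ω => ‖x t ω - xstar‖^2) P)
:    ∀ t : ℕ,
      ∫ ω, ‖x (t+1) ω - xstar‖^2 ∂P
      ≤ (1 - γ*μ*α) * ∫ ω, ‖x t ω - xstar‖^2 ∂P
        - 2*α*(γ - α*L) * (∫ ω, f (x t ω) ∂P - f xstar) + α^2*σ^2 := by
  intro t
  have hx : StronglyMeasurable[historySigma g t] (x t) :=
    (measurable_historySigma_of_sub_smul hx0 hstep t).stronglyMeasurable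
  have hf'_cont : Continuous f' :=
    (LipschitzWith.of_dist_le' (by simpa only [dist_eq_norm] using hsmooth)).continuous
  have hg2 : MemLp (g t) 2 P :=
    (memLp_two_iff_integrable_sq_norm (hgmeas t).aestronglyMeasurable).2 (hgsqint t)
  rw [hstep t]
  exact integral_norm_sgd_step_sub_sq_le (historySigma_le hgmeas t) hγ0 hα0.le hsqc
    (norm_sq_gradient_le hgrad hmin hsmooth) hx (hf'_cont.comp_stronglyMeasurable hx) hg2
    (hunbiased t) (hvar t) (hfint t) (hsqint t)

theorem sgd_strongly_quasar_one_step
    {Ω : Type*} [MeasurableSpace Ω] (P : Measure Ω) [IsProbabilityMeasure P]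
    {n : ℕ} (f : EuclideanSpace ℝ (Fin n) → ℝ)
    (f' : EuclideanSpace ℝ (Fin n) → EuclideanSpace ℝ (Fin n))
    (xstar x₀ : EuclideanSpace ℝ (Fin n))
    (L γ μ σ α : ℝ)
    (x g : ℕ → Ω → EuclideanSpace ℝ (Fin n))
    (hgrad : ∀ y, HasGradientAt f (f' y) y)
    (hmin : ∀ y, f xstar ≤ f y)
    (hγ0 : 0 < γ) (hγ1 : γ ≤ 1) (hμ : 0 < μ)
    (hsqc : ∀ y, f xstar ≥ f y + (1/γ) * ⟪f' y, xstar - y⟫ + (μ/2) * ‖y - xstar‖^2)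
    (hsmooth : ∀ y z, ‖f' y - f' z‖ ≤ L * ‖y - z‖)
    (hα0 : 0 < α)
    (hx0 : x 0 = fun _ => x₀)
    (hstep : ∀ t, x (t+1) = fun ω => x t ω - α • g t ω)
    (hgmeas : ∀ t, Measurable (g t))
    (hgint : ∀ t, Integrable (g t) P)
    (hgsqint : ∀ t, Integrable (fun ω => ‖g t ω‖^2) P)
    (hunbiased : ∀ t,
      MeasureTheory.condExp
          (⨆ i ∈ Finset.range t, MeasurableSpace.comap (g i) inferInstance) P (g t)
        =ᵐ[P] fun ω => f' (x t ω))
    (hvar : ∀ t, ∀ᵐ ω ∂P,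
      MeasureTheory.condExp
          (⨆ i ∈ Finset.range t, MeasurableSpace.comap (g i) inferInstance) P
          (fun ω' => ‖g t ω' - f' (x t ω')‖^2) ω ≤ σ^2)
    (hfint : ∀ t, Integrable (fun ω => f (x t ω)) P)
    (hsqint : ∀ t, Integrable (fun ω => ‖x t ω - xstar‖^2) P)
:    ∀ t : ℕ,
      ∫ ω, ‖x (t+1) ω - xstar‖^2 ∂P
      ≤ (1 - γ*μ*α) * ∫ ω, ‖x t ω - xstar‖^2 ∂P
        - 2*α*(γ - α*L) * (∫ ω, f (x t ω) ∂P - f xstar) + α^2*σ^2 :=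
  sgd_strongly_quasar_one_step_general P f f' xstar x₀ L γ μ σ α x g hgrad hmin hγ0 hsqc hsmooth hα0
    hx0 hstep hgmeas hgsqint hunbiased hvar hfint hsqint
end
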